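/- arXiv:2106.15972 — 4 statements merged into one kernel-verified Lean document; each statement's English description precedes it below -/
import Mathlib

section
/- Theorem 1 (exponential kernel). Let α∈(0,1) and k=α/(1−α). Define f(x,t) = k t e^{−kx−t} W_{1,2}(k x t) for x>0, t≥0. Then f(x,0)=0 for all x>0, and for all x>0 and t≥0 the function f satisfies the integro-differential equation ∂f/∂t(x,t) = −∫_0^x (∂f/∂z)(z,t) e^{−k(x−z)} dz + k(1−t) e^{−t−kx}. -/
open MeasureTheory Real Set

/-- The Wright function `W_{a,b}(x) = Σ_{j≥0} x^j / (j! Γ(a j + b))`. -/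
noncomputable def wright (a b x : ℝ) : ℝ :=
  ∑' j : ℕ, x ^ j / ((Nat.factorial j : ℝ) * Real.Gamma (a * j + b))

/-- The one-parameter Mittag-Leffler function `E_ν(x) = Σ_{j≥0} x^j / Γ(ν j + 1)`. -/
noncomputable def mlOne (ν x : ℝ) : ℝ :=
  ∑' j : ℕ, x ^ j / Real.Gamma (ν * j + 1)

/-- The two-parameter Mittag-Leffler function `E_{a,b}(x) = Σ_{j≥0} x^j / Γ(a j + b)`. -/
noncomputable def mlTwo (a b x : ℝ) : ℝ :=
  ∑' j : ℕ, x ^ j / Real.Gamma (a * j + b)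

/-- The rising factorial `(γ)_j = γ (γ+1) ⋯ (γ+j-1)`. -/
noncomputable def risingFactorial (γ : ℝ) (j : ℕ) : ℝ :=
  ∏ i ∈ Finset.range j, (γ + i)

/-- The Prabhakar (three-parameter Mittag-Leffler) function
`E^γ_{a,b}(x) = Σ_{j≥0} (γ)_j x^j / (j! Γ(a j + b))`. -/
noncomputable def prabhakar (a b γ x : ℝ) : ℝ :=
  ∑' j : ℕ, risingFactorial γ j * x ^ j / ((Nat.factorial j : ℝ) * Real.Gamma (a * j + b))

/-- The upper incomplete gamma function `Γ(ρ; x) = ∫_x^∞ e^{-w} w^{ρ-1} dw`. -/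
noncomputable def uGamma (ρ x : ℝ) : ℝ :=
  ∫ w in Set.Ioi x, Real.exp (-w) * w ^ (ρ - 1)

/-- `convIter g n` is the `(n+1)`-fold convolution `g^{*(n+1)}` of `g` on `(0,∞)`:
`convIter g 0 = g` and `convIter g (n+1) = g * (convIter g n)`. -/
noncomputable def convIter (g : ℝ → ℝ) : ℕ → ℝ → ℝ
  | 0 => g
  | n + 1 => fun x => ∫ y in (0:ℝ)..x, g (x - y) * convIter g n y

open scoped Nat

/-! Write `W = W_{1,2}` and `V = W_{1,1}`. Termwise differentiation of the series gives `V' = W`,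
`W' = W_{1,3}` and `(s W(m s))' = V(m s)`. The last identity yields
`∂ₜ f = k e^{-kx-t} (V(kxt) - t W(kxt))`, while the first two show that, up to the factor
`k e^{-t-kx}`, the integrand has the antiderivative `z ↦ t W(ktz) - V(ktz)`; both sides of the
equation then reduce to the same closed form. -/

section PowerSeries

variable {c : ℕ → ℝ}

theorem hasDerivAt_tsum_mul_pow_succ (hc : ∀ R, Summable fun j => |c j| * R ^ j) (y : ℝ) :
    HasDerivAt (fun y => ∑' j, c j * y ^ (j + 1)) (∑' j, (j + 1) * c j * y ^ j) y := by
  set R := |y| + 1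
  have hR : 0 < R := by positivity
  refine hasDerivAt_tsum_of_isPreconnected (g := fun j y => c j * y ^ (j + 1))
    (g' := fun j y => (j + 1) * c j * y ^ j) (hc (2 * R)) Metric.isOpen_ball
    (convex_ball (0 : ℝ) R).isPreconnected (fun j z _ => ?_) (fun j z hz => ?_)
    (Metric.mem_ball_self hR) (by simp) (by simp [R])
  · exact ((hasDerivAt_pow (j + 1) z).const_mul (c j)).congr_deriv (by push_cast; ring)
  · have hz : |z| ≤ R := by simpa using (Metric.mem_ball.mp hz).le
    have hj : (j : ℝ) + 1 ≤ 2 ^ j := by exact_mod_cast Nat.lt_two_pow_self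
    calc ‖(j + 1) * c j * z ^ j‖ = |c j| * ((j + 1) * |z| ^ j) := by
          rw [Real.norm_eq_abs, abs_mul, abs_mul, abs_pow,
            abs_of_pos (by positivity : (0 : ℝ) < j + 1)]
          ring
      _ ≤ |c j| * (2 ^ j * R ^ j) := by gcongr
      _ = |c j| * (2 * R) ^ j := by rw [mul_pow]

theorem summable_mul_pow_of_summable_abs (hc : ∀ R, Summable fun j => |c j| * R ^ j) (y : ℝ) :
    Summable fun j => c j * y ^ j :=
  .of_norm <| by simpa [abs_mul, abs_pow] using hc |y|

theorem summable_abs_succ_mul_pow (hc : ∀ R, Summable fun j => |c j| * R ^ j) (R : ℝ) :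
    Summable fun j => |c (j + 1)| * R ^ j := by
  set M := max |R| 1
  refine .of_norm_bounded ((summable_nat_add_iff 1).mpr (hc M)) fun j => ?_
  rw [Real.norm_eq_abs, abs_mul, abs_abs, abs_pow]
  gcongr
  calc |R| ^ j ≤ M ^ j := by gcongr; exact le_max_left _ _
    _ ≤ M ^ (j + 1) := pow_le_pow_right₀ (le_max_right _ _) j.le_succ

theorem summable_abs_mul_pow_mul (hc : ∀ R, Summable fun j => |c j| * R ^ j) (m R : ℝ) :
    Summable fun j => |c j * m ^ j| * R ^ j := by
  simpa [abs_mul, abs_pow, mul_pow, mul_assoc] using hc (|m| * R)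

theorem hasDerivAt_tsum_mul_pow (hc : ∀ R, Summable fun j => |c j| * R ^ j) (y : ℝ) :
    HasDerivAt (fun y => ∑' j, c j * y ^ j) (∑' j, (j + 1) * c (j + 1) * y ^ j) y := by
  have hshift :
      (fun y => ∑' j, c j * y ^ j) = fun y => c 0 + ∑' j, c (j + 1) * y ^ (j + 1) := by
    funext y
    rw [(summable_mul_pow_of_summable_abs hc y).tsum_eq_zero_add, pow_zero, mul_one]
  rw [hshift]
  exact (hasDerivAt_tsum_mul_pow_succ (summable_abs_succ_mul_pow hc) y).const_add (c 0)

end PowerSeries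

section Wright

theorem wright_zero (a b : ℝ) : wright a b 0 = (Gamma b)⁻¹ := by
  rw [wright, tsum_eq_single 0 fun j hj => by simp [zero_pow hj]]
  simp

noncomputable def wrightOneCoeff (n j : ℕ) : ℝ := ((j ! * (j + n)! : ℕ) : ℝ)⁻¹

theorem wright_one_nat_add_one (n : ℕ) (y : ℝ) :
    wright 1 (n + 1) y = ∑' j, wrightOneCoeff n j * y ^ j := by
  refine tsum_congr fun j => ?_
  have hΓ : Gamma (1 * j + (n + 1)) = (j + n)! := by
    rw [← Real.Gamma_nat_eq_factorial]; push_cast; ring_nf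
  rw [hΓ, wrightOneCoeff, div_eq_inv_mul]
  push_cast
  rfl

theorem summable_abs_wrightOneCoeff_mul_pow (n : ℕ) (R : ℝ) :
    Summable fun j => |wrightOneCoeff n j| * R ^ j := by
  refine .of_norm_bounded (Real.summable_pow_div_factorial |R|) fun j => ?_
  rw [Real.norm_eq_abs, abs_mul, abs_abs, abs_pow, wrightOneCoeff, abs_of_nonneg (by positivity),
    div_eq_inv_mul]
  gcongr
  exact Nat.le_mul_of_pos_right _ (Nat.factorial_pos _)

theorem hasDerivAt_wright_one (n : ℕ) (y : ℝ) :
    HasDerivAt (wright 1 (n + 1)) (wright 1 (n + 2) y) y := by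
  have hcoeff : ∀ j : ℕ, (j + 1) * wrightOneCoeff n (j + 1) = wrightOneCoeff (n + 1) j := by
    intro j
    simp only [wrightOneCoeff, Nat.add_right_comm j 1 n, ← add_assoc, Nat.factorial_succ]
    push_cast
    field_simp
  have h := hasDerivAt_tsum_mul_pow (summable_abs_wrightOneCoeff_mul_pow n) y
  simp only [hcoeff] at h
  rw [show (n : ℝ) + 2 = (n + 1 : ℕ) + 1 by push_cast; ring, wright_one_nat_add_one]
  exact h.congr_of_eventuallyEq (.of_forall fun z => wright_one_nat_add_one n z)

theorem hasDerivAt_mul_wright_one_two (m s : ℝ) :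
    HasDerivAt (fun s => s * wright 1 2 (m * s)) (wright 1 1 (m * s)) s := by
  have hseries :
      ∀ s, s * wright 1 2 (m * s) = ∑' j, wrightOneCoeff 1 j * m ^ j * s ^ (j + 1) := by
    intro s
    rw [show wright 1 2 (m * s) = _ by
      simpa [one_add_one_eq_two] using wright_one_nat_add_one 1 (m * s), ← tsum_mul_left]
    exact tsum_congr fun j => by ring
  have hcoeff : ∀ j : ℕ, (j + 1) * (wrightOneCoeff 1 j * m ^ j) * s ^ j
      = wrightOneCoeff 0 j * (m * s) ^ j := by
    intro j
    simp only [wrightOneCoeff, add_zero, Nat.factorial_succ]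
    push_cast
    field_simp
    ring
  have h := hasDerivAt_tsum_mul_pow_succ
    (summable_abs_mul_pow_mul (summable_abs_wrightOneCoeff_mul_pow 1) m) s
  simp only [hcoeff] at h
  rw [show wright 1 1 (m * s) = _ by simpa using wright_one_nat_add_one 0 (m * s)]
  exact h.congr_of_eventuallyEq (.of_forall hseries)

theorem hasDerivAt_wright_one_comp_mul (n : ℕ) (c z : ℝ) :
    HasDerivAt (fun z => wright 1 (n + 1) (c * z)) (c * wright 1 (n + 2) (c * z)) z :=
  ((hasDerivAt_wright_one n (c * z)).comp z ((hasDerivAt_id z).const_mul c)).congr_deriv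
    (by ring)

theorem continuous_wright_one (n : ℕ) : Continuous (wright 1 (n + 1)) :=
  continuous_iff_continuousAt.2 fun y => (hasDerivAt_wright_one n y).continuousAt

theorem integral_wright_one (c t x : ℝ) :
    ∫ z in (0 : ℝ)..x, (t * (c * wright 1 3 (c * z)) - c * wright 1 2 (c * z))
      = t * (wright 1 2 (c * x) - 1) - (wright 1 1 (c * x) - 1) := by
  have hV := hasDerivAt_wright_one_comp_mul 0 c
  have hW := hasDerivAt_wright_one_comp_mul 1 c
  norm_num [one_add_one_eq_two] at hV hW
  have hcont : Continuous fun z => t * (c * wright 1 3 (c * z)) - c * wright 1 2 (c * z) := by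
    have h2 := continuous_wright_one 1
    have h3 := continuous_wright_one 2
    norm_num at h2 h3
    fun_prop
  rw [intervalIntegral.integral_eq_sub_of_hasDerivAt (fun z _ => ((hW z).const_mul t).sub (hV z))
    (hcont.intervalIntegrable 0 x)]
  simp only [Pi.sub_apply, mul_zero, wright_zero, Real.Gamma_one, Real.Gamma_two, inv_one]
  ring

end Wright

section ExponentialKernel

variable (k : ℝ)

noncomputable def expKernelSol (x t : ℝ) : ℝ :=
  k * t * exp (-k * x - t) * wright 1 2 (k * x * t)

theorem hasDerivAt_expKernelSol_time (x t : ℝ) :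
    HasDerivAt (expKernelSol k x)
      (k * (wright 1 1 (k * x * t) - t * wright 1 2 (k * x * t)) * exp (-k * x - t)) t := by
  have hexp : HasDerivAt (fun s => exp (-k * x - s)) (exp (-k * x - t) * (-1)) t := by
    simpa using ((hasDerivAt_id t).const_sub (-k * x)).exp
  have h := (hexp.fun_mul (hasDerivAt_mul_wright_one_two (k * x) t)).const_mul k
  rw [show expKernelSol k x = fun s => k * (exp (-k * x - s) * (s * wright 1 2 (k * x * s))) by
    funext s; rw [expKernelSol]; ring]
  exact h.congr_deriv (by ring)

theorem deriv_expKernelSol_space_mul_exp (x t z : ℝ) :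
    deriv (fun w => expKernelSol k w t) z * exp (-k * (x - z))
      = k * exp (-k * x - t) *
          (t * (k * t * wright 1 3 (k * t * z)) - k * t * wright 1 2 (k * t * z)) := by
  have hexp : HasDerivAt (fun w => exp (-k * w - t)) (exp (-k * z - t) * (-k)) z := by
    simpa using (((hasDerivAt_id z).const_mul (-k)).sub_const t).exp
  have hW := hasDerivAt_wright_one_comp_mul 1 (k * t) z
  norm_num [one_add_one_eq_two] at hW
  have h := (hexp.fun_mul hW).const_mul (k * t)
  rw [show (fun w => expKernelSol k w t)
      = fun w => k * t * (exp (-k * w - t) * wright 1 2 (k * t * w)) by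
    funext w; rw [expKernelSol]; ring_nf, h.deriv]
  have hexp_mul : exp (-k * z - t) * exp (-k * (x - z)) = exp (-k * x - t) := by
    rw [← Real.exp_add]; ring_nf
  linear_combination
    (k * t * (-k * wright 1 2 (k * t * z) + k * t * wright 1 3 (k * t * z))) * hexp_mul

end ExponentialKernel

theorem exponential_kernel_theorem_general (k : ℝ) (f : ℝ → ℝ → ℝ)
    (hf : ∀ x t : ℝ, f x t = k * t * Real.exp (-k * x - t) * wright 1 2 (k * x * t)) :
    (∀ x : ℝ, 0 < x → f x 0 = 0) ∧
    (∀ x : ℝ, 0 < x → ∀ t : ℝ, 0 ≤ t →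
      deriv (f x) t =
        -(∫ z in (0:ℝ)..x, deriv (fun w => f w t) z * Real.exp (-k * (x - z))) +
          k * (1 - t) * Real.exp (-t - k * x)) := by
  obtain rfl : f = expKernelSol k := funext₂ hf
  refine ⟨fun x _ => by simp [expKernelSol], fun x _ t _ => ?_⟩
  simp only [(hasDerivAt_expKernelSol_time k x t).deriv, deriv_expKernelSol_space_mul_exp,
    intervalIntegral.integral_const_mul, integral_wright_one]
  rw [mul_right_comm k x t, show -t - k * x = -k * x - t by ring]
  ring

theorem exponential_kernel_theorem (α k : ℝ) (hα : α ∈ Set.Ioo (0:ℝ) 1)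
    (hk : k = α / (1 - α)) (f : ℝ → ℝ → ℝ)
    (hf : ∀ x t : ℝ, f x t = k * t * Real.exp (-k * x - t) * wright 1 2 (k * x * t)) :
    (∀ x : ℝ, 0 < x → f x 0 = 0) ∧
    (∀ x : ℝ, 0 < x → ∀ t : ℝ, 0 ≤ t →
      deriv (f x) t =
        -(∫ z in (0:ℝ)..x, deriv (fun w => f w t) z * Real.exp (-k * (x - z))) +
          k * (1 - t) * Real.exp (-t - k * x)) :=
  exponential_kernel_theorem_general k f hf
end

section
/- Laplace transform of the exponential-kernel density. Let α∈(0,1), k=α/(1−α) and t≥0. Then for every η>0, ∫_0^∞ e^{−ηx} · k t e^{−kx−t} W_{1,2}(k x t) dx = e^{−η t/(η+k)} − e^{−t}. -/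
open MeasureTheory Real Set

/-!
Expanding `W_{1,2}(b x) = Σ_j (b x)^j / (j! (j+1)!)` and integrating term by term against
`e^{-c x}`, each `x^j` contributes `j! / c^{j+1}`, so the Laplace transform of `b W_{1,2}(b x)` is
`Σ_j (b/c)^{j+1} / (j+1)! = e^{b/c} - 1`. With `b = k t` and `c = η + k` the factor `e^{-t}`
turns this into `e^{-η t/(η+k)} - e^{-t}`.
-/

open scoped Nat

lemma integrableOn_pow_mul_exp_neg_mul_Ioi {c : ℝ} (hc : 0 < c) (j : ℕ) :
    IntegrableOn (fun x : ℝ => x ^ j * exp (-(c * x))) (Ioi 0) := by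
  simpa [rpow_natCast] using
    integrableOn_rpow_mul_exp_neg_mul_rpow (p := 1) (s := j) (b := c)
      (neg_one_lt_zero.trans_le j.cast_nonneg) one_pos hc

lemma integral_pow_mul_exp_neg_mul_Ioi {c : ℝ} (hc : 0 < c) (j : ℕ) :
    ∫ x in Ioi (0:ℝ), x ^ j * exp (-(c * x)) = j ! / c ^ (j + 1) := by
  have h := integral_rpow_mul_exp_neg_mul_Ioi (a := j + 1) (by positivity) hc
  simp_rw [add_sub_cancel_right, rpow_natCast, Gamma_nat_eq_factorial] at h
  rw [h, ← Nat.cast_succ, rpow_natCast, one_div, inv_pow, inv_mul_eq_div]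

lemma integral_tsum_mul_pow_mul_exp_neg_mul_Ioi {a : ℕ → ℝ} {c : ℝ} (hc : 0 < c)
    (ha : Summable fun j => |a j| * j ! / c ^ (j + 1)) :
    ∫ x in Ioi (0:ℝ), (∑' j, a j * x ^ j) * exp (-(c * x)) =
      ∑' j, a j * j ! / c ^ (j + 1) := by
  have hterm : ∀ j, ∫ x in Ioi (0:ℝ), a j * (x ^ j * exp (-(c * x))) = a j * j ! / c ^ (j + 1) :=
    fun j => by rw [integral_const_mul, integral_pow_mul_exp_neg_mul_Ioi hc, mul_div_assoc]
  have hnorm : ∀ j, ∫ x in Ioi (0:ℝ), ‖a j * (x ^ j * exp (-(c * x)))‖ =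
      |a j| * j ! / c ^ (j + 1) := fun j => by
    rw [mul_div_assoc, ← integral_pow_mul_exp_neg_mul_Ioi hc, ← integral_const_mul]
    refine setIntegral_congr_fun measurableSet_Ioi fun x (hx : 0 < x) => ?_
    rw [norm_mul, Real.norm_eq_abs, Real.norm_of_nonneg (by positivity)]
  simp_rw [← tsum_mul_right, mul_assoc, ← hterm]
  exact (integral_tsum_of_summable_integral_norm
    (fun j => (integrableOn_pow_mul_exp_neg_mul_Ioi hc j).const_mul (a j))
    (by simpa only [hnorm] using ha)).symm

lemma wright_one_two_eq_tsum (x : ℝ) : wright 1 2 x = ∑' j : ℕ, x ^ j / (j ! * (j + 1)!) := by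
  refine tsum_congr fun j => ?_
  rw [one_mul, show (j : ℝ) + 2 = ((j + 1 : ℕ) : ℝ) + 1 by push_cast; ring,
    Gamma_nat_eq_factorial]

lemma tsum_pow_succ_div_factorial_succ (u : ℝ) :
    ∑' j : ℕ, u ^ (j + 1) / (j + 1)! = exp u - 1 := by
  rw [exp_eq_exp_ℝ, NormedSpace.exp_eq_tsum_div]
  dsimp only
  rw [(Real.summable_pow_div_factorial u).tsum_eq_zero_add]
  simp

lemma integral_mul_wright_one_two_mul_exp_neg_mul_Ioi (b : ℝ) {c : ℝ} (hc : 0 < c) :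
    ∫ x in Ioi (0:ℝ), b * wright 1 2 (b * x) * exp (-(c * x)) = exp (b / c) - 1 := by
  have hseries : ∀ x, b * wright 1 2 (b * x) =
      ∑' j : ℕ, b ^ (j + 1) / (j ! * (j + 1)!) * x ^ j := fun x => by
    rw [wright_one_two_eq_tsum, ← tsum_mul_left]
    refine tsum_congr fun j => ?_
    ring
  have hcoeff : ∀ (d : ℝ) (j : ℕ), d ^ (j + 1) / (j ! * (j + 1)!) * j ! / c ^ (j + 1) =
      (d / c) ^ (j + 1) / (j + 1)! := fun d j => by
    rw [div_pow]
    field_simp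
  simp_rw [hseries]
  rw [integral_tsum_mul_pow_mul_exp_neg_mul_Ioi hc, ← tsum_pow_succ_div_factorial_succ]
  · simp_rw [hcoeff]
  · have hsum := (summable_nat_add_iff 1).2 (Real.summable_pow_div_factorial |b / c|)
    refine hsum.congr fun j => ?_
    rw [abs_div b, abs_of_pos hc, ← hcoeff, abs_div, abs_pow,
      abs_of_pos (by positivity : (0:ℝ) < j ! * (j + 1)!)]

theorem laplace_exponential_kernel_density_general (α k t : ℝ) (hα : α ∈ Set.Ioo (0:ℝ) 1)
    (hk : k = α / (1 - α)) :
    ∀ η : ℝ, 0 < η →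
      (∫ x in Set.Ioi (0:ℝ),
        Real.exp (-η * x) * (k * t * Real.exp (-k * x - t) * wright 1 2 (k * x * t))) =
      Real.exp (-η * t / (η + k)) - Real.exp (-t) := by
  intro η hη
  have hk0 : 0 < k := hk ▸ div_pos hα.1 (sub_pos.2 hα.2)
  have hc : 0 < η + k := by positivity
  have hintegrand : ∀ x, exp (-η * x) * (k * t * exp (-k * x - t) * wright 1 2 (k * x * t)) =
      exp (-t) * (k * t * wright 1 2 (k * t * x) * exp (-((η + k) * x))) := fun x => by
    rw [show k * x * t = k * t * x by ring, show -k * x - t = -t + -(k * x) by ring, exp_add,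
      show -((η + k) * x) = -η * x + -(k * x) by ring, exp_add]
    ring
  simp_rw [hintegrand]
  rw [integral_const_mul, integral_mul_wright_one_two_mul_exp_neg_mul_Ioi _ hc, mul_sub, mul_one,
    ← exp_add]
  congr 2
  field_simp
  ring

theorem laplace_exponential_kernel_density (α k t : ℝ) (hα : α ∈ Set.Ioo (0:ℝ) 1)
    (hk : k = α / (1 - α)) (ht : 0 ≤ t) :
    ∀ η : ℝ, 0 < η →
      (∫ x in Set.Ioi (0:ℝ),
        Real.exp (-η * x) * (k * t * Real.exp (-k * x - t) * wright 1 2 (k * x * t))) =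
      Real.exp (-η * t / (η + k)) - Real.exp (-t) :=
  laplace_exponential_kernel_density_general α k t hα hk
end

section
/- Laplace transform of the Mittag-Leffler-kernel density. Let α∈(0,1), ν∈(0,1], k=α/(1−α), t≥0. Then for every η>0 with η^ν > k, ∫_0^∞ e^{−ηx} · (e^{−t}/x) Σ_{n=1}^∞ ((k t x^ν)^n/n!) E^n_{ν,νn}(−k x^ν) dx = e^{−η^ν t/(η^ν+k)} − e^{−t}. -/
open MeasureTheory Real Set

/-!
Expanding the Prabhakar function turns the integrand into a double series over `(n, j)` whose
terms are multiples of gamma densities of rate `η` and shape `ν (n+j+1)`. With `s = η ^ ν` the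
coefficients are `e⁻ᵗ (kt/s)ⁿ⁺¹/(n+1)! · C(n+j, n) (-k/s)ʲ`; the negative binomial series sums
them over `j` to `e⁻ᵗ (kt/(s+k))ⁿ⁺¹/(n+1)!`, and the exponential series then over `n`.
Since `|k| < s` the absolute coefficients are summable too; this justifies integrating termwise
and also gives convergence of the double series for almost every `x`, so no growth estimate on
`Γ` is needed.
-/

open ProbabilityTheory
open scoped Nat

section SeriesOfIntegrals

variable {α ι κ E : Type*} [MeasurableSpace α] {μ : Measure α} [Countable ι] [Countable κ]
  [NormedAddCommGroup E] [CompleteSpace E]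

theorem ae_summable_of_summable_integral_norm {F : ι → α → E}
    (hF_int : ∀ i, Integrable (F i) μ) (hF_sum : Summable fun i ↦ ∫ a, ‖F i a‖ ∂μ) :
    ∀ᵐ a ∂μ, Summable fun i ↦ F i a := by
  have h_eLpNorm : ∑' i, eLpNorm (F i) 1 μ ≠ ⊤ := by
    simp_rw [eLpNorm_one_eq_lintegral_enorm, ← ofReal_integral_norm_eq_lintegral_enorm (hF_int _)]
    rw [← ENNReal.ofReal_tsum_of_nonneg (fun i ↦ integral_nonneg fun a ↦ norm_nonneg _) hF_sum]
    exact ENNReal.ofReal_ne_top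
  filter_upwards [summable_norm_of_tsum_eLpNorm_ne_top le_rfl (fun i ↦ (hF_int i).1) h_eLpNorm]
    with a ha using ha.of_norm

variable [NormedSpace ℝ E]

theorem integral_tsum_tsum_of_summable_integral_norm {F : ι × κ → α → E}
    (hF_int : ∀ p, Integrable (F p) μ) (hF_sum : Summable fun p ↦ ∫ a, ‖F p a‖ ∂μ) :
    ∫ a, ∑' i, ∑' j, F (i, j) a ∂μ = ∑' i, ∑' j, ∫ a, F (i, j) a ∂μ := by
  have h_sum : Summable fun p ↦ ∫ a, F p a ∂μ :=
    hF_sum.of_norm_bounded fun p ↦ norm_integral_le_integral_norm _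
  calc ∫ a, ∑' i, ∑' j, F (i, j) a ∂μ = ∫ a, ∑' p, F p a ∂μ := by
        refine integral_congr_ae ?_
        filter_upwards [ae_summable_of_summable_integral_norm hF_int hF_sum] with a ha
        exact (ha.tsum_prod' ha.prod_factor).symm
    _ = ∑' p, ∫ a, F p a ∂μ := (integral_tsum_of_summable_integral_norm hF_int hF_sum).symm
    _ = ∑' i, ∑' j, ∫ a, F (i, j) a ∂μ := h_sum.tsum_prod' h_sum.prod_factor

end SeriesOfIntegrals

theorem Real.hasSum_pow_succ_div_factorial_succ (z : ℝ) :
    HasSum (fun n : ℕ ↦ z ^ (n + 1) / (n + 1)!) (exp z - 1) := by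
  have h := NormedSpace.expSeries_div_hasSum_exp (𝔸 := ℝ) z
  rw [← Real.exp_eq_exp_ℝ] at h
  simpa using (hasSum_nat_add_iff' 1).mpr h

/-- The terms of `exp (z / (1 - w)) - 1 = ∑ₙ zⁿ⁺¹ / (n+1)! · (1 - w)⁻⁽ⁿ⁺¹⁾` after expanding each
`(1 - w)⁻⁽ⁿ⁺¹⁾` as a negative binomial series in `w`. -/
noncomputable def expBinomialTerm (z w : ℝ) (p : ℕ × ℕ) : ℝ :=
  z ^ (p.1 + 1) / (p.1 + 1)! * ((p.2 + p.1).choose p.1 * w ^ p.2)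

section ExpBinomialTerm

variable {z w : ℝ}

theorem hasSum_expBinomialTerm_fiber (hw : |w| < 1) (n : ℕ) :
    HasSum (fun j ↦ expBinomialTerm z w (n, j)) ((z / (1 - w)) ^ (n + 1) / (n + 1)!) := by
  rw [show (z / (1 - w)) ^ (n + 1) / (n + 1)! = z ^ (n + 1) / (n + 1)! * (1 / (1 - w) ^ (n + 1))
    by rw [div_pow]; ring]
  exact (hasSum_choose_mul_geometric_of_norm_lt_one (𝕜 := ℝ) n hw).mul_left _

theorem abs_expBinomialTerm (p : ℕ × ℕ) :
    |expBinomialTerm z w p| = expBinomialTerm |z| |w| p := by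
  simp [expBinomialTerm, abs_mul, abs_div, abs_pow]

theorem summable_expBinomialTerm (hw : |w| < 1) : Summable (expBinomialTerm z w) := by
  refine Summable.of_abs ?_
  simp_rw [abs_expBinomialTerm]
  have hw' : |(|w|)| < 1 := by rwa [abs_abs]
  refine (summable_prod_of_nonneg fun p ↦ by simp [← abs_expBinomialTerm]).mpr
    ⟨fun n ↦ (hasSum_expBinomialTerm_fiber hw' n).summable, ?_⟩
  simp_rw [(hasSum_expBinomialTerm_fiber hw' _).tsum_eq]
  exact (Real.hasSum_pow_succ_div_factorial_succ _).summable

theorem tsum_tsum_expBinomialTerm (hw : |w| < 1) :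
    ∑' n, ∑' j, expBinomialTerm z w (n, j) = exp (z / (1 - w)) - 1 := by
  simp_rw [(hasSum_expBinomialTerm_fiber hw _).tsum_eq]
  exact (Real.hasSum_pow_succ_div_factorial_succ _).tsum_eq

end ExpBinomialTerm

section GammaPDF

variable {a r : ℝ}

theorem integral_Ioi_gammaPDFReal (ha : 0 < a) (hr : 0 < r) :
    ∫ x in Ioi 0, gammaPDFReal a r x = 1 := by
  have h_pdf : EqOn (gammaPDFReal a r) (fun x ↦ r ^ a / Gamma a * (x ^ (a - 1) * exp (-(r * x))))
      (Ioi 0) := fun x (hx : 0 < x) ↦ by simp [gammaPDFReal, hx.le, mul_assoc]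
  rw [setIntegral_congr_fun measurableSet_Ioi h_pdf, integral_const_mul,
    integral_rpow_mul_exp_neg_mul_Ioi ha hr, one_div, inv_rpow hr.le]
  have hra : r ^ a ≠ 0 := (rpow_pos_of_pos hr a).ne'
  field_simp [(Gamma_pos_of_pos ha).ne']

theorem integrableOn_Ioi_gammaPDFReal (ha : 0 < a) (hr : 0 < r) :
    IntegrableOn (gammaPDFReal a r) (Ioi 0) :=
  Integrable.of_integral_ne_zero (by rw [integral_Ioi_gammaPDFReal ha hr]; exact one_ne_zero)

end GammaPDF

theorem risingFactorial_natCast_add_one (n j : ℕ) :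
    risingFactorial ((n : ℝ) + 1) j = j ! * (j + n).choose n := by
  have h := Nat.ascFactorial_eq_factorial_mul_choose n j
  rw [Nat.ascFactorial_eq_prod_range, add_comm n j, Nat.choose_symm_add] at h
  simp only [risingFactorial]
  exact_mod_cast (by simpa [add_right_comm] using h)

/-- The `(n, j)` term of the integrand after expanding `prabhakar`,
`e⁻ᵗ (k t)ⁿ⁺¹ / (n+1)! · (n+1)ⱼ (-k)ʲ / j! · x^(ν (n+j+1) - 1) e^(-η x) / Γ(ν (n+j+1))`,
written as a multiple of a gamma density of rate `η` and shape `ν (n+j+1)`. -/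
noncomputable def kernelTerm (ν η k t : ℝ) (p : ℕ × ℕ) (x : ℝ) : ℝ :=
  exp (-t) * expBinomialTerm (k * t / η ^ ν) (-k / η ^ ν) p *
    gammaPDFReal (ν * (p.2 + p.1 + 1)) η x

section KernelTerm

variable {ν η : ℝ} (k t : ℝ)

theorem integrand_eq_tsum_tsum_kernelTerm (hν : 0 < ν) (hη : 0 < η) {x : ℝ} (hx : 0 < x) :
    exp (-η * x) * (exp (-t) / x *
      ∑' n : ℕ, (k * t * x ^ ν) ^ (n + 1) / (Nat.factorial (n + 1) : ℝ) *
        prabhakar ν (ν * (n + 1)) (n + 1) (-k * x ^ ν)) =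
      ∑' n, ∑' j, kernelTerm ν η k t (n, j) x := by
  rw [← mul_assoc, ← tsum_mul_left]
  refine tsum_congr fun n ↦ ?_
  rw [prabhakar, ← tsum_mul_left, ← tsum_mul_left]
  refine tsum_congr fun j ↦ ?_
  have hm : ν * ((j : ℝ) + n + 1) = ν * (j + n + 1 : ℕ) := by push_cast; ring
  have hx_pow : x ^ (ν * ((j : ℝ) + n + 1) - 1) = (x ^ ν) ^ (j + n + 1) / x := by
    rw [rpow_sub_one hx.ne', hm, rpow_mul_natCast hx.le]
  have hη_pow : η ^ (ν * ((j : ℝ) + n + 1)) = (η ^ ν) ^ (j + n + 1) := by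
    rw [hm, rpow_mul_natCast hη.le]
  have hΓ : Gamma (ν * j + ν * (n + 1)) ≠ 0 := (Gamma_pos_of_pos (by positivity)).ne'
  have hs : η ^ ν ≠ 0 := (rpow_pos_of_pos hη ν).ne'
  simp only [kernelTerm, expBinomialTerm, gammaPDFReal, if_pos hx.le]
  rw [hx_pow, hη_pow, risingFactorial_natCast_add_one,
    show ν * ((j : ℝ) + n + 1) = ν * j + ν * (n + 1) by ring, div_pow, div_pow]
  field_simp
  ring

theorem integral_kernelTerm (hν : 0 < ν) (hη : 0 < η) (p : ℕ × ℕ) :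
    ∫ x in Ioi 0, kernelTerm ν η k t p x =
      exp (-t) * expBinomialTerm (k * t / η ^ ν) (-k / η ^ ν) p := by
  simp only [kernelTerm]
  rw [integral_const_mul, integral_Ioi_gammaPDFReal (by positivity) hη, mul_one]

theorem integral_norm_kernelTerm (hν : 0 < ν) (hη : 0 < η) (p : ℕ × ℕ) :
    ∫ x in Ioi 0, ‖kernelTerm ν η k t p x‖ =
      exp (-t) * |expBinomialTerm (k * t / η ^ ν) (-k / η ^ ν) p| := by
  have hm : 0 < ν * (p.2 + p.1 + 1) := by positivity
  simp_rw [kernelTerm, norm_mul, norm_of_nonneg (gammaPDFReal_nonneg hm hη _), norm_eq_abs,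
    abs_of_pos (exp_pos _)]
  rw [integral_const_mul, integral_Ioi_gammaPDFReal hm hη, mul_one]

theorem integrableOn_kernelTerm (hν : 0 < ν) (hη : 0 < η) (p : ℕ × ℕ) :
    IntegrableOn (kernelTerm ν η k t p) (Ioi 0) :=
  (integrableOn_Ioi_gammaPDFReal (by positivity) hη).const_mul _

end KernelTerm

theorem laplace_mittag_leffler_kernel_density_of_abs_lt {ν η k : ℝ} (hν : 0 < ν) (hη : 0 < η)
    (hk : |k| < η ^ ν) (t : ℝ) :
    (∫ x in Set.Ioi (0:ℝ), Real.exp (-η * x) * (Real.exp (-t) / x *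
      ∑' n : ℕ, (k * t * x ^ ν) ^ (n + 1) / (Nat.factorial (n + 1) : ℝ) *
        prabhakar ν (ν * (n + 1)) (n + 1) (-k * x ^ ν))) =
      Real.exp (-(η ^ ν) * t / (η ^ ν + k)) - Real.exp (-t) := by
  have hs : 0 < η ^ ν := by linarith [abs_nonneg k]
  have hsk : η ^ ν + k ≠ 0 := by linarith [neg_abs_le k]
  have hw : |-k / η ^ ν| < 1 := by rwa [abs_div, abs_neg, abs_of_pos hs, div_lt_one hs]
  have h_sum : Summable fun p ↦ ∫ x in Ioi 0, ‖kernelTerm ν η k t p x‖ := by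
    simp_rw [integral_norm_kernelTerm k t hν hη]
    exact ((summable_expBinomialTerm hw).abs).mul_left _
  calc _ = ∫ x in Ioi 0, ∑' n, ∑' j, kernelTerm ν η k t (n, j) x :=
        setIntegral_congr_fun measurableSet_Ioi fun x hx ↦
          integrand_eq_tsum_tsum_kernelTerm k t hν hη hx
    _ = ∑' n, ∑' j, exp (-t) * expBinomialTerm (k * t / η ^ ν) (-k / η ^ ν) (n, j) := by
        rw [integral_tsum_tsum_of_summable_integral_norm
          (integrableOn_kernelTerm k t hν hη) h_sum]
        simp_rw [integral_kernelTerm k t hν hη]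
    _ = exp (-t) * (exp (k * t / η ^ ν / (1 - -k / η ^ ν)) - 1) := by
        simp_rw [tsum_mul_left, tsum_tsum_expBinomialTerm hw]
    _ = exp (-(η ^ ν) * t / (η ^ ν + k)) - exp (-t) := by
        have h_denom : 1 - -k / η ^ ν = (η ^ ν + k) / η ^ ν := by field_simp; ring
        rw [mul_sub, mul_one, ← exp_add]
        congr 2
        rw [h_denom, div_div_div_cancel_right₀ hs.ne', eq_div_iff hsk, add_mul,
          div_mul_cancel₀ _ hsk]
        ring

theorem laplace_mittag_leffler_kernel_density_general (α ν k t : ℝ) (hα : α ∈ Set.Ioo (0:ℝ) 1)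
    (hν : ν ∈ Set.Ioc (0:ℝ) 1) (hk : k = α / (1 - α)) :
    ∀ η : ℝ, 0 < η → k < η ^ ν →
      (∫ x in Set.Ioi (0:ℝ), Real.exp (-η * x) * (Real.exp (-t) / x *
        ∑' n : ℕ, (k * t * x ^ ν) ^ (n + 1) / (Nat.factorial (n + 1) : ℝ) *
          prabhakar ν (ν * (n + 1)) (n + 1) (-k * x ^ ν))) =
      Real.exp (-(η ^ ν) * t / (η ^ ν + k)) - Real.exp (-t) := by
  intro η hη hkη
  have hk_pos : 0 < k := hk ▸ div_pos hα.1 (sub_pos.mpr hα.2)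
  exact laplace_mittag_leffler_kernel_density_of_abs_lt hν.1 hη (by rwa [abs_of_pos hk_pos]) t

theorem laplace_mittag_leffler_kernel_density (α ν k t : ℝ) (hα : α ∈ Set.Ioo (0:ℝ) 1)
    (hν : ν ∈ Set.Ioc (0:ℝ) 1) (hk : k = α / (1 - α)) (ht : 0 ≤ t) :
    ∀ η : ℝ, 0 < η → k < η ^ ν →
      (∫ x in Set.Ioi (0:ℝ), Real.exp (-η * x) * (Real.exp (-t) / x *
        ∑' n : ℕ, (k * t * x ^ ν) ^ (n + 1) / (Nat.factorial (n + 1) : ℝ) *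
          prabhakar ν (ν * (n + 1)) (n + 1) (-k * x ^ ν))) =
      Real.exp (-(η ^ ν) * t / (η ^ ν + k)) - Real.exp (-t) :=
  laplace_mittag_leffler_kernel_density_general α ν k t hα hν hk
end

section
/- Bernstein function of the Mittag-Leffler kernel. Let ν∈(0,1] and k>0. Then for every η>0 with η^ν > k, η · ∫_0^∞ e^{−ηx} E_ν(−k x^ν) dx = η^ν/(η^ν + k). -/
open MeasureTheory Real Set

/-! The Laplace transform of `x ^ (ν j)` is `Γ(ν j + 1) / η ^ (ν j + 1)`, so integrating the
Mittag-Leffler series term by term against `e^{-η x}` leaves the geometric series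
`η⁻¹ Σ (c / η^ν)^j = η^(ν-1) / (η^ν - c)`; absolute convergence for `|c| < η^ν` justifies the
interchange. -/

section LaplaceTransform

variable {η : ℝ}

theorem integrableOn_exp_neg_mul_mul_rpow (hη : 0 < η) {s : ℝ} (hs : -1 < s) :
    IntegrableOn (fun x => exp (-η * x) * x ^ s) (Ioi 0) := by
  simpa only [rpow_one, mul_comm] using integrableOn_rpow_mul_exp_neg_mul_rpow hs one_pos hη

theorem integral_exp_neg_mul_mul_rpow (hη : 0 < η) {s : ℝ} (hs : -1 < s) :
    ∫ x in Ioi 0, exp (-η * x) * x ^ s = Gamma (s + 1) / η ^ (s + 1) := by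
  have h := integral_rpow_mul_exp_neg_mul_Ioi (a := s + 1) (by linarith) hη
  rw [add_sub_cancel_right, one_div, inv_rpow hη.le] at h
  rw [div_eq_inv_mul, ← h]
  refine setIntegral_congr_fun measurableSet_Ioi fun x _ => ?_
  rw [neg_mul, mul_comm]

theorem integral_exp_neg_mul_mul_tsum_rpow {ν : ℝ} (hν : 0 ≤ ν) (hη : 0 < η) {a : ℕ → ℝ}
    (ha : Summable fun j : ℕ => |a j| * (Gamma (ν * j + 1) / η ^ (ν * j + 1))) :
    ∫ x in Ioi 0, exp (-η * x) * ∑' j : ℕ, a j * x ^ (ν * j) =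
      ∑' j : ℕ, a j * (Gamma (ν * j + 1) / η ^ (ν * j + 1)) := by
  have hs (j : ℕ) : -1 < ν * j := by nlinarith [mul_nonneg hν j.cast_nonneg]
  have hint (j : ℕ) : IntegrableOn (fun x => a j * (exp (-η * x) * x ^ (ν * j))) (Ioi 0) :=
    (integrableOn_exp_neg_mul_mul_rpow hη (hs j)).const_mul (a j)
  have hnorm (j : ℕ) : ∫ x in Ioi 0, ‖a j * (exp (-η * x) * x ^ (ν * j))‖ =
      |a j| * (Gamma (ν * j + 1) / η ^ (ν * j + 1)) := by
    rw [← integral_exp_neg_mul_mul_rpow hη (hs j), ← integral_const_mul]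
    refine setIntegral_congr_fun measurableSet_Ioi fun x hx => ?_
    rw [norm_mul, Real.norm_eq_abs, Real.norm_of_nonneg (mul_nonneg (exp_pos _).le (rpow_nonneg (le_of_lt hx) _))]
  calc ∫ x in Ioi 0, exp (-η * x) * ∑' j : ℕ, a j * x ^ (ν * j)
      = ∫ x in Ioi 0, ∑' j : ℕ, a j * (exp (-η * x) * x ^ (ν * j)) := by
        simp_rw [← tsum_mul_left, mul_left_comm]
    _ = ∑' j : ℕ, ∫ x in Ioi 0, a j * (exp (-η * x) * x ^ (ν * j)) :=
        (integral_tsum_of_summable_integral_norm hint (by simpa only [hnorm] using ha)).symm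
    _ = ∑' j : ℕ, a j * (Gamma (ν * j + 1) / η ^ (ν * j + 1)) := by
        simp_rw [integral_const_mul, integral_exp_neg_mul_mul_rpow hη (hs _)]

end LaplaceTransform

theorem mlOne_mul_rpow (ν c : ℝ) {x : ℝ} (hx : 0 ≤ x) :
    mlOne ν (c * x ^ ν) = ∑' j : ℕ, c ^ j / Gamma (ν * j + 1) * x ^ (ν * j) := by
  refine tsum_congr fun j => ?_
  rw [rpow_mul hx, rpow_natCast, mul_pow]
  ring

theorem integral_exp_neg_mul_mul_mlOne {ν η c : ℝ} (hν : 0 ≤ ν) (hη : 0 < η)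
    (hc : |c| < η ^ ν) :
    ∫ x in Ioi 0, exp (-η * x) * mlOne ν (c * x ^ ν) = η ^ (ν - 1) / (η ^ ν - c) := by
  have hην : 0 < η ^ ν := rpow_pos_of_pos hη ν
  have hr : |c / η ^ ν| < 1 := by rwa [abs_div, abs_of_pos hην, div_lt_one hην]
  have hΓ (j : ℕ) : 0 < Gamma (ν * j + 1) :=
    Gamma_pos_of_pos (by nlinarith [mul_nonneg hν j.cast_nonneg])
  have hterm (j : ℕ) : c ^ j / Gamma (ν * j + 1) * (Gamma (ν * j + 1) / η ^ (ν * j + 1)) =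
      η⁻¹ * (c / η ^ ν) ^ j := by
    rw [rpow_add hη, rpow_one, rpow_mul hη.le, rpow_natCast, div_pow]
    field_simp [(hΓ j).ne']
  have hsum : Summable fun j : ℕ => η⁻¹ * (c / η ^ ν) ^ j :=
    (summable_geometric_of_abs_lt_one hr).mul_left _
  calc ∫ x in Ioi 0, exp (-η * x) * mlOne ν (c * x ^ ν)
      = ∫ x in Ioi 0, exp (-η * x) * ∑' j : ℕ, c ^ j / Gamma (ν * j + 1) * x ^ (ν * j) :=
        setIntegral_congr_fun measurableSet_Ioi fun x hx => by rw [mlOne_mul_rpow ν c hx.le]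
    _ = ∑' j : ℕ, η⁻¹ * (c / η ^ ν) ^ j := by
        rw [integral_exp_neg_mul_mul_tsum_rpow hν hη]
        · simp_rw [hterm]
        · refine hsum.abs.congr fun j => ?_
          rw [← hterm, abs_mul, abs_of_nonneg (div_nonneg (hΓ j).le (rpow_nonneg hη.le _))]
    _ = η ^ (ν - 1) / (η ^ ν - c) := by
        rw [tsum_mul_left, tsum_geometric_of_abs_lt_one hr, rpow_sub_one hη.ne']
        field_simp

theorem bernstein_function_mittag_leffler_kernel (ν k : ℝ) (hν : ν ∈ Set.Ioc (0:ℝ) 1)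
    (hk : 0 < k) :
    ∀ η : ℝ, 0 < η → k < η ^ ν →
      η * ∫ x in Set.Ioi (0:ℝ), Real.exp (-η * x) * mlOne ν (-k * x ^ ν) =
        η ^ ν / (η ^ ν + k) := by
  intro η hη hkη
  rw [integral_exp_neg_mul_mul_mlOne hν.1.le hη (by rwa [abs_neg, abs_of_pos hk]),
    rpow_sub_one hη.ne', sub_neg_eq_add]
  field_simp
end
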